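/- arXiv:2410.20289 — 4 statements merged into one kernel-verified Lean document; each statement's English description precedes it below -/
import Mathlib

section
/- For every depth d ∈ ℕ and all vectors n⁻, n⁺ ∈ ℕ^p, the BART sub-correlation function satisfies k_d(n⁻, 0, n⁺) = 1. -/
/-- Total weight `W(v) = Σ_{i : v_i ≠ 0} w_i` of the axes with at least one available split. -/
noncomputable def bartW (p : ℕ) (w : Fin p → ℝ) (v : Fin p → ℕ) : ℝ :=
  ∑ i ∈ Finset.univ.filter (fun i => v i ≠ 0), w i

/-- The BART sub-correlation function `k_d(n⁻, n⁰, n⁺)`, defined by well-founded recursion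
on `Σ_i (n⁻_i + n⁺_i)`. -/
noncomputable def bartK (p : ℕ) (w : Fin p → ℝ) (P : ℕ → ℝ)
    (d : ℕ) (nm n0 np : Fin p → ℕ) : ℝ :=
  if ∀ i, nm i + n0 i + np i = 0 then 1
  else
    1 - P d * (1 - (1 / bartW p w (fun i => nm i + n0 i + np i)) *
      ∑ i ∈ Finset.univ.filter (fun i => nm i + n0 i + np i ≠ 0),
        (w i / ((nm i + n0 i + np i : ℕ) : ℝ)) *
          ((∑ k ∈ (Finset.range (nm i)).attach,
              bartK p w P (d+1) (Function.update nm i k.1) n0 np) +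
           (∑ k ∈ (Finset.range (np i)).attach,
              bartK p w P (d+1) nm n0 (Function.update np i k.1))))
termination_by ∑ i, (nm i + np i)
decreasing_by
  · have hk : k.1 < nm i := Finset.mem_range.mp k.2
    refine Finset.sum_lt_sum (fun j _ => ?_) ⟨i, Finset.mem_univ i, ?_⟩
    · rcases eq_or_ne j i with rfl | hj
      · simp only [Function.update_self]; omega
      · simp only [Function.update_of_ne hj]; omega
    · simp only [Function.update_self]; omega
  · have hk : k.1 < np i := Finset.mem_range.mp k.2
    refine Finset.sum_lt_sum (fun j _ => ?_) ⟨i, Finset.mem_univ i, ?_⟩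
    · rcases eq_or_ne j i with rfl | hj
      · simp only [Function.update_self]; omega
      · simp only [Function.update_of_ne hj]; omega
    · simp only [Function.update_self]; omega

theorem Finset.sum_update_lt {ι : Type*} [Fintype ι] [DecidableEq ι] (f : ι → ℕ) {i : ι} {k : ℕ}
    (hk : k < f i) : ∑ j, Function.update f i k j < ∑ j, f j := by
  refine Finset.sum_lt_sum (fun j _ => ?_) ⟨i, Finset.mem_univ i, by simpa using hk⟩
  rcases eq_or_ne j i with rfl | hj
  · simpa using hk.le
  · simp [Function.update_of_ne hj]

theorem bartW_pos {p : ℕ} {w : Fin p → ℝ} (hw : ∀ i, 0 < w i) {v : Fin p → ℕ}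
    (hv : ¬∀ i, v i = 0) : 0 < bartW p w v := by
  obtain ⟨i, hi⟩ := not_forall.mp hv
  exact Finset.sum_pos (fun j _ => hw j) ⟨i, Finset.mem_filter.mpr ⟨Finset.mem_univ i, hi⟩⟩

/-- With `n⁰ = 0` the recursion preserves the constant `1`: if every child value is `1`, the
term of axis `i` is `(w_i / n_i) · (n⁻_i + n⁺_i) = w_i`, so the bracket is `1 - W(n)/W(n) = 0`. -/
theorem bartK_eq_one_of_children_eq_one {p : ℕ} {w : Fin p → ℝ} (hw : ∀ i, 0 < w i)
    (P : ℕ → ℝ) (d : ℕ) (nm np : Fin p → ℕ)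
    (hchild_m : ∀ i, ∀ k < nm i, bartK p w P (d+1) (Function.update nm i k) 0 np = 1)
    (hchild_p : ∀ i, ∀ k < np i, bartK p w P (d+1) nm 0 (Function.update np i k) = 1) :
    bartK p w P d nm 0 np = 1 := by
  rw [bartK]
  split_ifs with hzero
  · rfl
  simp only [Pi.zero_apply, add_zero] at hzero ⊢
  have hterm : ∀ i ∈ Finset.univ.filter (fun i => nm i + np i ≠ 0),
      (w i / ((nm i + np i : ℕ) : ℝ)) *
        ((∑ k ∈ (Finset.range (nm i)).attach,
            bartK p w P (d+1) (Function.update nm i k.1) 0 np) +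
         (∑ k ∈ (Finset.range (np i)).attach,
            bartK p w P (d+1) nm 0 (Function.update np i k.1))) = w i := by
    intro i hi
    rw [Finset.sum_congr rfl fun (k : Finset.range (nm i)) _ =>
        hchild_m i k (Finset.mem_range.mp k.2),
      Finset.sum_congr rfl fun (k : Finset.range (np i)) _ =>
        hchild_p i k (Finset.mem_range.mp k.2)]
    simp only [Finset.sum_const, Finset.card_attach, Finset.card_range, nsmul_eq_mul, mul_one,
      ← Nat.cast_add]
    exact div_mul_cancel₀ _ (Nat.cast_ne_zero.mpr (Finset.mem_filter.mp hi).2)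
  rw [Finset.sum_congr rfl hterm, ← bartW, one_div_mul_cancel (bartW_pos hw hzero).ne']
  ring

/-- Property 1 of Theorem 2: `k_d(n⁻, 0, n⁺) = 1` for every depth `d` and all `n⁻, n⁺`. -/
theorem bartK_eq_one_of_nZero_eq_zero
    (p : ℕ) (w : Fin p → ℝ) (hw : ∀ i, 0 < w i)
    (P : ℕ → ℝ)
    (d : ℕ) (nm np : Fin p → ℕ) :
    bartK p w P d nm 0 np = 1 :=
  bartK_eq_one_of_children_eq_one hw P d nm np
    (fun i k _ => bartK_eq_one_of_nZero_eq_zero p w hw P (d+1) (Function.update nm i k) np)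
    (fun i k _ => bartK_eq_one_of_nZero_eq_zero p w hw P (d+1) nm (Function.update np i k))
termination_by ∑ i, (nm i + np i)
decreasing_by
  all_goals simp only [Finset.sum_add_distrib]
  · have := Finset.sum_update_lt nm ‹_›
    omega
  · have := Finset.sum_update_lt np ‹_›
    omega
end

section
/- For every depth d ∈ ℕ and all n⁻, n⁰, n⁺ ∈ ℕ^p, the BART sub-correlation function satisfies 1 − P_d ≤ k_d(n⁻, n⁰, n⁺) ≤ 1. -/
/-!
Unfolding once, `k_d = 1 - P_d (1 - A)`, where `A` is a `w`-weighted average over the axes `i`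
with `n_i ≠ 0` of the quantity `(1 / n_i) · (sum of the n⁻_i + n⁺_i child values k_{d+1})`.
By induction along the recursion every child value lies in `[1 - P_{d+1}, 1] ⊆ [0, 1]`, and
`n⁻_i + n⁺_i ≤ n_i`, so `A ∈ [0, 1]`; hence `k_d ∈ [1 - P_d, 1]`.
-/

open Set

section OrderedBounds

variable {ι : Type*}

lemma Finset.sum_mem_Icc_sum {M : Type*} [AddCommMonoid M] [PartialOrder M]
    [IsOrderedAddMonoid M] {s : Finset ι} {a b : ι → M}
    (h : ∀ i ∈ s, a i ∈ Set.Icc 0 (b i)) : ∑ i ∈ s, a i ∈ Set.Icc 0 (∑ i ∈ s, b i) :=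
  ⟨Finset.sum_nonneg fun i hi => (h i hi).1, Finset.sum_le_sum fun i hi => (h i hi).2⟩

variable {𝕜 : Type*} [Field 𝕜] [LinearOrder 𝕜] [IsStrictOrderedRing 𝕜]

lemma div_mul_mem_Icc {c n x : 𝕜} (hc : 0 ≤ c) (hx : x ∈ Icc 0 n) : c / n * x ∈ Icc 0 c := by
  obtain ⟨hx0, hxn⟩ := hx
  rcases (hx0.trans hxn).eq_or_lt with rfl | hn
  · simpa using hc
  · refine ⟨by positivity, ?_⟩
    calc c / n * x ≤ c / n * n := by gcongr
      _ = c := div_mul_cancel₀ c hn.ne'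

lemma Finset.sum_mem_Icc_card {s : Finset ι} {f : ι → 𝕜}
    (hf : ∀ i ∈ s, f i ∈ Set.Icc 0 1) : ∑ i ∈ s, f i ∈ Set.Icc 0 (s.card : 𝕜) :=
  ⟨Finset.sum_nonneg fun i hi => (hf i hi).1,
    by simpa using Finset.sum_le_card_nsmul s f 1 fun i hi => (hf i hi).2⟩

lemma one_sub_mul_one_sub_mem_Icc {P A : 𝕜} (hP : P ∈ Icc 0 1) (hA : A ∈ Icc 0 1) :
    1 - P * (1 - A) ∈ Icc (1 - P) 1 := by
  obtain ⟨hP0, hP1⟩ := hP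
  obtain ⟨hA0, hA1⟩ := hA
  constructor <;> nlinarith

end OrderedBounds

lemma bartK_mem_Icc (p : ℕ) (w : Fin p → ℝ) (hw : ∀ i, 0 < w i)
    (P : ℕ → ℝ) (hP : ∀ d, P d ∈ Icc (0 : ℝ) 1) (d : ℕ) (nm n0 np : Fin p → ℕ) :
    bartK p w P d nm n0 np ∈ Icc (1 - P d) 1 := by
  induction d, nm, np using bartK.induct p n0 with
  | case1 d nm np h0 =>
    rw [bartK, if_pos h0]
    exact ⟨sub_le_self 1 (hP d).1, le_rfl⟩
  | case2 d nm np h0 ihm ihp =>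
    rw [bartK, if_neg h0]
    refine one_sub_mul_one_sub_mem_Icc (hP d)
      (div_mul_mem_Icc zero_le_one (Finset.sum_mem_Icc_sum fun i _ => ?_))
    have hchild : Icc (1 - P (d + 1)) 1 ⊆ Icc 0 1 :=
      Icc_subset_Icc_left (sub_nonneg.mpr (hP (d + 1)).2)
    have hm := Finset.sum_mem_Icc_card fun k (_ : k ∈ (Finset.range (nm i)).attach) =>
      hchild (ihm i k)
    have hp := Finset.sum_mem_Icc_card fun k (_ : k ∈ (Finset.range (np i)).attach) =>
      hchild (ihp i k)
    rw [Finset.card_attach, Finset.card_range] at hm hp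
    refine div_mul_mem_Icc (hw i).le ⟨add_nonneg hm.1 hp.1, ?_⟩
    push_cast
    linarith [hm.2, hp.2, (n0 i).cast_nonneg (α := ℝ)]

theorem bartK_bounds_general
    (p : ℕ) (w : Fin p → ℝ) (hw : ∀ i, 0 < w i)
    (P : ℕ → ℝ) (hP : ∀ d, P d ∈ Set.Icc (0 : ℝ) 1)
    (d : ℕ) (nm n0 np : Fin p → ℕ) :
    1 - P d ≤ bartK p w P d nm n0 np ∧ bartK p w P d nm n0 np ≤ 1 :=
  bartK_mem_Icc p w hw P hP d nm n0 np

/-- Property 3 of Theorem 2: `1 - P_d ≤ k_d(n⁻, n⁰, n⁺) ≤ 1`. -/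
theorem bartK_bounds
    (p : ℕ) (hp : 1 ≤ p) (w : Fin p → ℝ) (hw : ∀ i, 0 < w i)
    (P : ℕ → ℝ) (hP : ∀ d, P d ∈ Set.Icc (0 : ℝ) 1)
    (d : ℕ) (nm n0 np : Fin p → ℕ) :
    1 - P d ≤ bartK p w P d nm n0 np ∧ bartK p w P d nm n0 np ≤ 1 :=
  bartK_bounds_general p w hw P hP d nm n0 np
end

section
/- For every D ∈ ℕ, γ ∈ [0,1] and every choice of finite cutpoint sets S_1, …, S_p ⊆ ℝ, the kernel K : ℝ^p × ℝ^p → ℝ defined by K(x, x') = k^D_{0,γ}(n⁻(x,x'), n⁰(x,x'), n⁺(x,x')) is positive semidefinite and satisfies K(x, x) = 1 for all x; i.e. the truncated sub-correlation function is a valid correlation function. -/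
/-- The truncated BART sub-correlation function `k^D_{d,γ}`: same recursion as `k_d` for
`d < D`, with base cases `1` if `n = 0`, `1` at depth `D` if `n⁰ = 0`, and
`1 - (1-γ)·P_D` at depth `D` if `n⁰ ≠ 0`. -/
noncomputable def bartKT (p : ℕ) (w : Fin p → ℝ) (P : ℕ → ℝ) (D : ℕ) (γ : ℝ)
    (d : ℕ) (nm n0 np : Fin p → ℕ) : ℝ :=
  if ∀ i, nm i + n0 i + np i = 0 then 1
  else if D ≤ d then
    (if ∀ i, n0 i = 0 then 1 else 1 - (1 - γ) * P D)
  else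
    1 - P d * (1 - (1 / bartW p w (fun i => nm i + n0 i + np i)) *
      ∑ i ∈ Finset.univ.filter (fun i => nm i + n0 i + np i ≠ 0),
        (w i / ((nm i + n0 i + np i : ℕ) : ℝ)) *
          ((∑ k ∈ Finset.range (nm i),
              bartKT p w P D γ (d+1) (Function.update nm i k) n0 np) +
           (∑ k ∈ Finset.range (np i),
              bartKT p w P D γ (d+1) nm n0 (Function.update np i k))))
termination_by D - d
decreasing_by all_goals omega

/-- Number of cutpoints (weakly) below both points, along each axis. -/
noncomputable def nMinus (p : ℕ) (S : Fin p → Finset ℝ) (x x' : Fin p → ℝ) : Fin p → ℕ :=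
  fun i => ((S i).filter (fun s => s ≤ min (x i) (x' i))).card

/-- Number of cutpoints strictly between the two points, along each axis. -/
noncomputable def nZero (p : ℕ) (S : Fin p → Finset ℝ) (x x' : Fin p → ℝ) : Fin p → ℕ :=
  fun i => ((S i).filter (fun s => min (x i) (x' i) < s ∧ s ≤ max (x i) (x' i))).card

/-- Number of cutpoints strictly above both points, along each axis. -/
noncomputable def nPlus (p : ℕ) (S : Fin p → Finset ℝ) (x x' : Fin p → ℝ) : Fin p → ℕ :=
  fun i => ((S i).filter (fun s => max (x i) (x' i) < s)).card

namespace BartAux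


open scoped Classical in
/-- Indicator that two labels agree. -/
noncomputable def eqInd {α : Type} (a b : α) : ℝ := if a = b then 1 else 0

lemma eqInd_self {α : Type} (a : α) : eqInd a a = 1 := by simp [eqInd]

lemma eqInd_of_ne {α : Type} {a b : α} (h : a ≠ b) : eqInd a b = 0 := by
  simp [eqInd, h]

lemma eqInd_nonneg {α : Type} (a b : α) : 0 ≤ eqInd a b := by
  unfold eqInd; split <;> norm_num

lemma eqInd_congr {α β : Type} {a b : α} {a' b' : β} (h : a = b ↔ a' = b') :
    eqInd a b = eqInd a' b' := by
  unfold eqInd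
  by_cases hab : a = b
  · rw [if_pos hab, if_pos (h.mp hab)]
  · rw [if_neg hab, if_neg (fun hh => hab (h.mpr hh))]

variable {X : Type}

/-- Kernels that are finite convex combinations of equivalence ("same label") kernels. -/
def IsMix (K : X → X → ℝ) : Prop :=
  ∃ (n : ℕ) (q : Fin n → ℝ) (α : Fin n → Type) (f : (j : Fin n) → X → α j),
    (∀ j, 0 ≤ q j) ∧ (∑ j, q j = 1) ∧
    ∀ x x', K x x' = ∑ j, q j * eqInd (f j x) (f j x')

lemma isMix_congr {K K' : X → X → ℝ} (h : IsMix K) (he : ∀ x x', K x x' = K' x x') :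
    IsMix K' := by
  obtain ⟨n, q, α, f, h0, h1, hK⟩ := h
  exact ⟨n, q, α, f, h0, h1, fun x x' => (he x x') ▸ hK x x'⟩

lemma isMix_of_fintype (ι : Type) [Fintype ι] (q : ι → ℝ) (α : ι → Type)
    (f : (j : ι) → X → α j) (h0 : ∀ j, 0 ≤ q j) (h1 : ∑ j, q j = 1) (K : X → X → ℝ)
    (hK : ∀ x x', K x x' = ∑ j, q j * eqInd (f j x) (f j x')) :
    IsMix K := by
  classical
  let e := (Fintype.equivFin ι).symm
  refine ⟨Fintype.card ι, fun k => q (e k), fun k => α (e k), fun k => f (e k),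
    fun k => h0 _, ?_, fun x x' => ?_⟩
  · rw [Equiv.sum_comp e q, h1]
  · rw [hK x x', Equiv.sum_comp e (fun j => q j * eqInd (f j x) (f j x'))]

lemma isMix_const_one : IsMix (fun _ _ : X => (1:ℝ)) := by
  refine ⟨1, fun _ => 1, fun _ => Unit, fun _ _ => (), fun _ => zero_le_one, by simp, ?_⟩
  intro x x'; simp [eqInd]

lemma isMix_eqKer {α : Type} (g : X → α) :
    IsMix (fun x x' => eqInd (g x) (g x')) := by
  refine ⟨1, fun _ => 1, fun _ => α, fun _ => g, fun _ => zero_le_one, by simp, ?_⟩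
  intro x x'; simp

lemma isMix_mix (ι : Type) [Fintype ι] (lam : ι → ℝ) (K : ι → X → X → ℝ)
    (h0 : ∀ j, 0 ≤ lam j) (h1 : ∑ j, lam j = 1) (hK : ∀ j, IsMix (K j)) :
    IsMix (fun x x' => ∑ j, lam j * K j x x') := by
  classical
  choose n q α f hq hsum hker using hK
  refine isMix_of_fintype ((j : ι) × Fin (n j)) (fun z => lam z.1 * q z.1 z.2)
    (fun z => α z.1 z.2) (fun z => f z.1 z.2)
    (fun z => mul_nonneg (h0 z.1) (hq z.1 z.2)) ?_ _ (fun x x' => ?_)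
  · rw [← Finset.univ_sigma_univ, Finset.sum_sigma]
    calc (∑ j : ι, ∑ k : Fin (n j), lam j * q j k)
        = ∑ j : ι, lam j * ∑ k : Fin (n j), q j k := by
          refine Finset.sum_congr rfl fun j _ => ?_; rw [Finset.mul_sum]
      _ = 1 := by simp only [hsum]; simpa using h1
  · rw [← Finset.univ_sigma_univ, Finset.sum_sigma]
    refine Finset.sum_congr rfl fun j _ => ?_
    rw [hker j x x', Finset.mul_sum]
    refine Finset.sum_congr rfl fun k _ => by ring

lemma isMix_glue (g : X → Bool) (Kt Kf : X → X → ℝ) (ht : IsMix Kt) (hf : IsMix Kf) :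
    IsMix (fun x x' => if g x = g x' then (if g x then Kt x x' else Kf x x') else 0) := by
  classical
  obtain ⟨nt, qt, αt, ft, ht0, ht1, htK⟩ := ht
  obtain ⟨nf, qf, αf, ff, hf0, hf1, hfK⟩ := hf
  set h : Fin nt × Fin nf → X → ((Σ j, αt j) ⊕ (Σ k, αf k)) :=
    fun z x => if g x then Sum.inl ⟨z.1, ft z.1 x⟩ else Sum.inr ⟨z.2, ff z.2 x⟩ with hh
  refine isMix_congr (K := fun x x' => ∑ z : Fin nt × Fin nf,
      (qt z.1 * qf z.2) * eqInd (h z x) (h z x')) ?_ ?_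
  · refine isMix_mix _ _ (fun z x x' => eqInd (h z x) (h z x'))
      (fun z => mul_nonneg (ht0 z.1) (hf0 z.2)) ?_ (fun z => isMix_eqKer (h z))
    rw [Fintype.sum_prod_type]
    calc (∑ j : Fin nt, ∑ k : Fin nf, qt j * qf k)
        = ∑ j : Fin nt, qt j * ∑ k : Fin nf, qf k := by
          refine Finset.sum_congr rfl fun j _ => ?_; rw [Finset.mul_sum]
      _ = 1 := by rw [hf1]; simpa using ht1
  · intro x x'
    show (∑ z : Fin nt × Fin nf, qt z.1 * qf z.2 * eqInd (h z x) (h z x'))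
      = (if g x = g x' then (if g x then Kt x x' else Kf x x') else 0)
    symm
    by_cases hgx : g x = g x'
    · rw [if_pos hgx]
      cases hb : g x with
      | true =>
        have hb' : g x' = true := hgx ▸ hb
        rw [if_pos rfl, htK x x', Fintype.sum_prod_type]
        refine Finset.sum_congr rfl fun j _ => ?_
        symm
        have hcond : ∀ k : Fin nf,
            eqInd (h (j, k) x) (h (j, k) x') = eqInd (ft j x) (ft j x') := by
          intro k
          refine eqInd_congr ?_
          simp only [hh, hb, hb', if_true]
          simp
        calc (∑ k : Fin nf, (qt j * qf k) * eqInd (h (j, k) x) (h (j, k) x'))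
            = ∑ k : Fin nf, qf k * (qt j * eqInd (ft j x) (ft j x')) := by
              refine Finset.sum_congr rfl fun k _ => ?_
              rw [hcond k]; ring
          _ = qt j * eqInd (ft j x) (ft j x') := by
              rw [← Finset.sum_mul, hf1, one_mul]
      | false =>
        have hb' : g x' = false := hgx ▸ hb
        rw [if_neg (Bool.false_ne_true), hfK x x',
          Fintype.sum_prod_type, Finset.sum_comm]
        refine Finset.sum_congr rfl fun k _ => ?_
        symm
        have hcond : ∀ j : Fin nt,
            eqInd (h (j, k) x) (h (j, k) x') = eqInd (ff k x) (ff k x') := by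
          intro j
          refine eqInd_congr ?_
          simp only [hh, hb, hb']
          simp
        calc (∑ j : Fin nt, (qt j * qf k) * eqInd (h (j, k) x) (h (j, k) x'))
            = ∑ j : Fin nt, qt j * (qf k * eqInd (ff k x) (ff k x')) := by
              refine Finset.sum_congr rfl fun j _ => ?_
              rw [hcond j]; ring
          _ = qf k * eqInd (ff k x) (ff k x') := by
              rw [← Finset.sum_mul, ht1, one_mul]
    · rw [if_neg hgx]
      refine (Finset.sum_eq_zero ?_).symm
      rintro ⟨j, k⟩ -
      have : h (j, k) x ≠ h (j, k) x' := by
        simp only [hh]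
        cases hx : g x <;> cases hx' : g x' <;> simp_all
      rw [eqInd_of_ne this, mul_zero]

lemma eqKer_psd {α : Type} {N : ℕ} (F : Fin N → α) (c : Fin N → ℝ) :
    0 ≤ ∑ a, ∑ b, c a * c b * eqInd (F a) (F b) := by
  classical
  have key : ∀ a, (∑ b, c a * c b * eqInd (F a) (F b))
      = c a * ∑ b ∈ Finset.univ.filter (fun b => F b = F a), c b := by
    intro a
    rw [Finset.sum_filter, Finset.mul_sum]
    refine Finset.sum_congr rfl fun b _ => ?_
    by_cases hb : F b = F a
    · rw [if_pos hb]
      have : eqInd (F a) (F b) = 1 := hb ▸ eqInd_self (F b)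
      rw [this]; ring
    · rw [if_neg hb, eqInd_of_ne (fun hh => hb hh.symm)]; ring
  calc (0:ℝ)
      ≤ ∑ v ∈ Finset.univ.image F,
          (∑ a ∈ Finset.univ.filter (fun a => F a = v), c a) *
          (∑ a ∈ Finset.univ.filter (fun a => F a = v), c a) :=
        Finset.sum_nonneg fun v _ => mul_self_nonneg _
    _ = ∑ v ∈ Finset.univ.image F, ∑ a ∈ Finset.univ.filter (fun a => F a = v),
          (c a * ∑ b ∈ Finset.univ.filter (fun b => F b = F a), c b) := by
        refine Finset.sum_congr rfl fun v _ => ?_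
        rw [Finset.sum_mul]
        refine Finset.sum_congr rfl fun a ha => ?_
        rw [(Finset.mem_filter.mp ha).2]
    _ = ∑ a, (c a * ∑ b ∈ Finset.univ.filter (fun b => F b = F a), c b) :=
        Finset.sum_fiberwise_of_maps_to
          (fun a _ => Finset.mem_image_of_mem F (Finset.mem_univ a)) _
    _ = ∑ a, ∑ b, c a * c b * eqInd (F a) (F b) :=
        Finset.sum_congr rfl fun a _ => (key a).symm

lemma isMix_psd {K : X → X → ℝ} (h : IsMix K) {N : ℕ} (x : Fin N → X) (c : Fin N → ℝ) :
    0 ≤ ∑ a, ∑ b, c a * c b * K (x a) (x b) := by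
  obtain ⟨n, q, α, f, h0, h1, hK⟩ := h
  have step : ∀ a b, c a * c b * K (x a) (x b)
      = ∑ j, q j * (c a * c b * eqInd (f j (x a)) (f j (x b))) := by
    intro a b
    rw [hK, Finset.mul_sum]
    refine Finset.sum_congr rfl fun j _ => by ring
  have key : (∑ a, ∑ b, c a * c b * K (x a) (x b))
      = ∑ j, q j * ∑ a, ∑ b, c a * c b * eqInd (f j (x a)) (f j (x b)) := by
    simp only [step]
    calc (∑ a, ∑ b, ∑ j, q j * (c a * c b * eqInd (f j (x a)) (f j (x b))))
        = ∑ a, ∑ j, ∑ b, q j * (c a * c b * eqInd (f j (x a)) (f j (x b))) :=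
          Finset.sum_congr rfl fun a _ => Finset.sum_comm
      _ = ∑ j, ∑ a, ∑ b, q j * (c a * c b * eqInd (f j (x a)) (f j (x b))) :=
          Finset.sum_comm
      _ = ∑ j, q j * ∑ a, ∑ b, c a * c b * eqInd (f j (x a)) (f j (x b)) := by
          refine Finset.sum_congr rfl fun j _ => ?_
          rw [Finset.mul_sum]
          refine Finset.sum_congr rfl fun a _ => ?_
          rw [Finset.mul_sum]
  rw [key]
  exact Finset.sum_nonneg fun j _ => mul_nonneg (h0 j) (eqKer_psd (fun a => f j (x a)) c)

lemma isMix_diag {K : X → X → ℝ} (h : IsMix K) (x : X) : K x x = 1 := by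
  obtain ⟨n, q, α, f, h0, h1, hK⟩ := h
  rw [hK]; simp [eqInd_self, h1]



lemma sum_card_filter_gt (T : Finset ℝ) (F : ℕ → ℝ) :
    ∑ s ∈ T, F ((T.filter (fun t => s < t)).card) = ∑ k ∈ Finset.range T.card, F k := by
  classical
  induction T using Finset.induction_on_min with
  | empty => simp
  | insert a s ha ih =>
    have hna : a ∉ s := fun h => lt_irrefl a (ha a h)
    rw [Finset.sum_insert hna, Finset.card_insert_of_notMem hna, Finset.sum_range_succ]
    have h1 : ((insert a s).filter (fun t => a < t)) = s := by
      rw [Finset.filter_insert, if_neg (lt_irrefl a)]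
      exact Finset.filter_true_of_mem ha
    have h2 : ∀ x ∈ s, ((insert a s).filter (fun t => x < t)) = s.filter (fun t => x < t) := by
      intro x hx
      rw [Finset.filter_insert, if_neg (not_lt.mpr (le_of_lt (ha x hx)))]
    calc F (((insert a s).filter (fun t => a < t)).card)
          + ∑ x ∈ s, F (((insert a s).filter (fun t => x < t)).card)
        = F s.card + ∑ x ∈ s, F ((s.filter (fun t => x < t)).card) := by
          rw [h1]
          congr 1
          exact Finset.sum_congr rfl fun x hx => by rw [h2 x hx]
      _ = F s.card + ∑ k ∈ Finset.range s.card, F k := by rw [ih]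
      _ = ∑ k ∈ Finset.range s.card, F k + F s.card := by ring

lemma sum_card_filter_lt (T : Finset ℝ) (F : ℕ → ℝ) :
    ∑ s ∈ T, F ((T.filter (fun t => t < s)).card) = ∑ k ∈ Finset.range T.card, F k := by
  classical
  induction T using Finset.induction_on_max with
  | empty => simp
  | insert a s ha ih =>
    have hna : a ∉ s := fun h => lt_irrefl a (ha a h)
    rw [Finset.sum_insert hna, Finset.card_insert_of_notMem hna, Finset.sum_range_succ]
    have h1 : ((insert a s).filter (fun t => t < a)) = s := by
      rw [Finset.filter_insert, if_neg (lt_irrefl a)]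
      exact Finset.filter_true_of_mem ha
    have h2 : ∀ x ∈ s, ((insert a s).filter (fun t => t < x)) = s.filter (fun t => t < x) := by
      intro x hx
      rw [Finset.filter_insert, if_neg (not_lt.mpr (le_of_lt (ha x hx)))]
    calc F (((insert a s).filter (fun t => t < a)).card)
          + ∑ x ∈ s, F (((insert a s).filter (fun t => t < x)).card)
        = F s.card + ∑ x ∈ s, F ((s.filter (fun t => t < x)).card) := by
          rw [h1]
          congr 1
          exact Finset.sum_congr rfl fun x hx => by rw [h2 x hx]
      _ = F s.card + ∑ k ∈ Finset.range s.card, F k := by rw [ih]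
      _ = ∑ k ∈ Finset.range s.card, F k + F s.card := by ring

lemma counts_partition (T : Finset ℝ) (m M : ℝ) (hmM : m ≤ M) :
    (T.filter (fun s => s ≤ m)).card + (T.filter (fun s => m < s ∧ s ≤ M)).card
      + (T.filter (fun s => M < s)).card = T.card := by
  classical
  have h1 := Finset.card_filter_add_card_filter_not (s := T) (p := fun s => s ≤ m)
  have h2 := Finset.card_filter_add_card_filter_not
    (s := T.filter (fun s => ¬ s ≤ m)) (p := fun s => s ≤ M)
  rw [Finset.filter_filter, Finset.filter_filter] at h2
  have e1 : T.filter (fun s => ¬ s ≤ m ∧ s ≤ M) = T.filter (fun s => m < s ∧ s ≤ M) := by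
    refine Finset.filter_congr fun s _ => by rw [not_le]
  have e2 : T.filter (fun s => ¬ s ≤ m ∧ ¬ s ≤ M) = T.filter (fun s => M < s) := by
    refine Finset.filter_congr fun s _ => ?_
    constructor
    · rintro ⟨-, h⟩; exact not_le.mp h
    · intro h; exact ⟨not_le.mpr (lt_of_le_of_lt hmM h), not_le.mpr h⟩
  rw [e1, e2] at h2
  omega

/-- The count of cutpoints weakly below a point. -/
noncomputable def cLabel (p : ℕ) (S : Fin p → Finset ℝ) (x : Fin p → ℝ) : Fin p → ℕ :=
  fun i => ((S i).filter (fun s => s ≤ x i)).card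

lemma nZero_zero_iff (T : Finset ℝ) (a b : ℝ) :
    (T.filter (fun s => min a b < s ∧ s ≤ max a b)).card = 0
      ↔ (T.filter (fun s => s ≤ a)).card = (T.filter (fun s => s ≤ b)).card := by
  classical
  rcases le_total a b with hab | hab
  · rw [min_eq_left hab, max_eq_right hab]
    have key := counts_partition T a b hab
    have key2 : (T.filter (fun s => s ≤ b)).card
        = (T.filter (fun s => s ≤ a)).card + (T.filter (fun s => a < s ∧ s ≤ b)).card := by
      have h := Finset.card_filter_add_card_filter_not
        (s := T.filter (fun s => s ≤ b)) (p := fun s => s ≤ a)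
      rw [Finset.filter_filter, Finset.filter_filter] at h
      have e1 : T.filter (fun s => s ≤ b ∧ s ≤ a) = T.filter (fun s => s ≤ a) :=
        Finset.filter_congr fun s _ => ⟨fun h => h.2, fun h => ⟨le_trans h hab, h⟩⟩
      have e2 : T.filter (fun s => s ≤ b ∧ ¬ s ≤ a) = T.filter (fun s => a < s ∧ s ≤ b) :=
        Finset.filter_congr fun s _ => by rw [not_le]; exact ⟨fun h => ⟨h.2, h.1⟩, fun h => ⟨h.2, h.1⟩⟩
      rw [e1, e2] at h
      omega
    omega
  · rw [min_eq_right hab, max_eq_left hab]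
    have key2 : (T.filter (fun s => s ≤ a)).card
        = (T.filter (fun s => s ≤ b)).card + (T.filter (fun s => b < s ∧ s ≤ a)).card := by
      have h := Finset.card_filter_add_card_filter_not
        (s := T.filter (fun s => s ≤ a)) (p := fun s => s ≤ b)
      rw [Finset.filter_filter, Finset.filter_filter] at h
      have e1 : T.filter (fun s => s ≤ a ∧ s ≤ b) = T.filter (fun s => s ≤ b) :=
        Finset.filter_congr fun s _ => ⟨fun h => h.2, fun h => ⟨le_trans h hab, h⟩⟩
      have e2 : T.filter (fun s => s ≤ a ∧ ¬ s ≤ b) = T.filter (fun s => b < s ∧ s ≤ a) :=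
        Finset.filter_congr fun s _ => by rw [not_le]; exact ⟨fun h => ⟨h.2, h.1⟩, fun h => ⟨h.2, h.1⟩⟩
      rw [e1, e2] at h
      omega
    omega



variable {p : ℕ} (S : Fin p → Finset ℝ) (x x' : Fin p → ℝ) (i0 : Fin p) (s : ℝ)

lemma counts_R (hs : s ≤ min (x i0) (x' i0)) :
    nMinus p (Function.update S i0 ((S i0).filter (fun t => s < t))) x x'
      = Function.update (nMinus p S x x') i0
          ((((S i0).filter (fun t => t ≤ min (x i0) (x' i0))).filter (fun t => s < t)).card)
    ∧ nZero p (Function.update S i0 ((S i0).filter (fun t => s < t))) x x' = nZero p S x x'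
    ∧ nPlus p (Function.update S i0 ((S i0).filter (fun t => s < t))) x x' = nPlus p S x x' := by
  classical
  refine ⟨funext fun j => ?_, funext fun j => ?_, funext fun j => ?_⟩ <;>
    by_cases hj : j = i0
  · subst hj
    simp only [nMinus, Function.update_self, Finset.filter_filter]
    congr 1
    refine Finset.filter_congr fun t _ => ?_
    exact and_comm
  · simp only [nMinus, Function.update_of_ne hj]
  · subst hj
    simp only [nZero, Function.update_self, Finset.filter_filter]
    congr 1
    refine Finset.filter_congr fun t _ => ?_
    constructor
    · rintro ⟨-, h⟩; exact h
    · rintro ⟨h1, h2⟩; exact ⟨lt_of_le_of_lt hs h1, h1, h2⟩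
  · simp only [nZero, Function.update_of_ne hj]
  · subst hj
    simp only [nPlus, Function.update_self, Finset.filter_filter]
    congr 1
    refine Finset.filter_congr fun t _ => ?_
    constructor
    · rintro ⟨-, h⟩; exact h
    · intro h
      exact ⟨lt_of_le_of_lt (hs.trans (min_le_max)) h, h⟩
  · simp only [nPlus, Function.update_of_ne hj]

lemma counts_L (hs : max (x i0) (x' i0) < s) :
    nPlus p (Function.update S i0 ((S i0).filter (fun t => t < s))) x x'
      = Function.update (nPlus p S x x') i0
          ((((S i0).filter (fun t => max (x i0) (x' i0) < t)).filter (fun t => t < s)).card)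
    ∧ nZero p (Function.update S i0 ((S i0).filter (fun t => t < s))) x x' = nZero p S x x'
    ∧ nMinus p (Function.update S i0 ((S i0).filter (fun t => t < s))) x x' = nMinus p S x x' := by
  classical
  refine ⟨funext fun j => ?_, funext fun j => ?_, funext fun j => ?_⟩ <;>
    by_cases hj : j = i0
  · subst hj
    simp only [nPlus, Function.update_self, Finset.filter_filter]
    congr 1
    refine Finset.filter_congr fun t _ => ?_
    exact and_comm
  · simp only [nPlus, Function.update_of_ne hj]
  · subst hj
    simp only [nZero, Function.update_self, Finset.filter_filter]
    congr 1
    refine Finset.filter_congr fun t _ => ?_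
    constructor
    · rintro ⟨-, h⟩; exact h
    · rintro ⟨h1, h2⟩; exact ⟨lt_of_le_of_lt h2 hs, h1, h2⟩
  · simp only [nZero, Function.update_of_ne hj]
  · subst hj
    simp only [nMinus, Function.update_self, Finset.filter_filter]
    congr 1
    refine Finset.filter_congr fun t _ => ?_
    constructor
    · rintro ⟨-, h⟩; exact h
    · intro h
      exact ⟨lt_of_le_of_lt (h.trans min_le_max) hs, h⟩
  · simp only [nMinus, Function.update_of_ne hj]

lemma counts_sum (i : Fin p) :
    nMinus p S x x' i + nZero p S x x' i + nPlus p S x x' i = (S i).card := by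
  classical
  have := counts_partition (S i) (min (x i) (x' i)) (max (x i) (x' i)) min_le_max
  simpa [nMinus, nZero, nPlus] using this


open scoped Classical

lemma isMix_bartKT_le {p : ℕ} (w : Fin p → ℝ) (P : ℕ → ℝ) (D : ℕ) (γ : ℝ)
    (hP : ∀ d, P d ∈ Set.Icc (0:ℝ) 1) (hγ : γ ∈ Set.Icc (0:ℝ) 1)
    (d : ℕ) (hDd : D ≤ d) (S : Fin p → Finset ℝ) :
    IsMix (fun x x' : Fin p → ℝ =>
      bartKT p w P D γ d (nMinus p S x x') (nZero p S x x') (nPlus p S x x')) := by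
  classical
  have hγ1 := hγ.1
  have hγ2 := hγ.2
  have hPD1 := (hP D).1
  have hPD2 := (hP D).2
  have hθ0 : 0 ≤ (1 - γ) * P D := mul_nonneg (by linarith) hPD1
  have hθ1 : (1 - γ) * P D ≤ 1 := by nlinarith
  refine isMix_of_fintype Bool (fun b => if b then (1 - γ) * P D else 1 - (1 - γ) * P D)
    (fun _ => Option (Fin p → ℕ))
    (fun b x => if b then some (cLabel p S x) else none)
    (fun b => by cases b <;> simp <;> linarith) ?_ _ (fun x x' => ?_)
  · rw [Fintype.sum_bool]
    simp
  · rw [Fintype.sum_bool]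
    simp only [Bool.false_eq_true, ite_true, ite_false]
    have hval : bartKT p w P D γ d (nMinus p S x x') (nZero p S x x') (nPlus p S x x')
        = if (∀ i, nZero p S x x' i = 0) then 1 else 1 - (1 - γ) * P D := by
      rw [bartKT]
      by_cases h : ∀ i, nMinus p S x x' i + nZero p S x x' i + nPlus p S x x' i = 0
      · rw [if_pos h, if_pos (fun i => by have := h i; omega)]
      · rw [if_neg h, if_pos hDd]
    rw [hval, eqInd_self]
    by_cases h0 : ∀ i, nZero p S x x' i = 0
    · have hc : cLabel p S x = cLabel p S x' :=
        funext fun i => (nZero_zero_iff (S i) (x i) (x' i)).mp (h0 i)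
      rw [if_pos h0, hc, eqInd_self]
      ring
    · have hc : (some (cLabel p S x) : Option (Fin p → ℕ)) ≠ some (cLabel p S x') := by
        intro hc
        exact h0 fun i => (nZero_zero_iff (S i) (x i) (x' i)).mpr
          (congrFun (Option.some.inj hc) i)
      rw [if_neg h0, eqInd_of_ne hc]
      ring

lemma isMix_bartKT (p : ℕ) (w : Fin p → ℝ) (hw : ∀ i, 0 < w i) (P : ℕ → ℝ)
    (hP : ∀ d, P d ∈ Set.Icc (0:ℝ) 1) (D : ℕ) (γ : ℝ) (hγ : γ ∈ Set.Icc (0:ℝ) 1) :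
    ∀ (m d : ℕ), D - d ≤ m → ∀ (S : Fin p → Finset ℝ),
      IsMix (fun x x' : Fin p → ℝ =>
        bartKT p w P D γ d (nMinus p S x x') (nZero p S x x') (nPlus p S x x')) := by
  classical
  intro m
  induction m with
  | zero =>
    intro d hd S
    exact isMix_bartKT_le w P D γ hP hγ d (by omega) S
  | succ m ih =>
    intro d hd S
    by_cases hDd : D ≤ d
    · exact isMix_bartKT_le w P D γ hP hγ d hDd S
    by_cases hS : ∀ i, S i = ∅
    · refine isMix_congr isMix_const_one (fun x x' => ?_)
      symm
      rw [bartKT, if_pos]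
      intro i
      simp [nMinus, nZero, nPlus, hS i]
    push_neg at hS
    obtain ⟨i0, hi0⟩ := hS
    have hi0 : S i0 ≠ ∅ := hi0.ne_empty
    have hPd1 := (hP d).1
    have hPd2 := (hP d).2
    set F : Finset (Fin p) := Finset.univ.filter (fun i => S i ≠ ∅) with hF
    set W : ℝ := ∑ i ∈ F, w i with hWdef
    have hWpos : 0 < W := Finset.sum_pos (fun i _ => hw i)
      ⟨i0, by simp only [hF, Finset.mem_filter, Finset.mem_univ, true_and]; exact hi0⟩
    have hmem : D - (d+1) ≤ m := by omega
    -- glue data, indexed by an axis and a cutpoint value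
    set g : Fin p → ℝ → (Fin p → ℝ) → Bool := fun i s y => decide (s ≤ y i) with hg
    set KR : Fin p → ℝ → (Fin p → ℝ) → (Fin p → ℝ) → ℝ := fun i s x x' =>
      bartKT p w P D γ (d+1)
        (nMinus p (Function.update S i ((S i).filter (fun t => s < t))) x x')
        (nZero p (Function.update S i ((S i).filter (fun t => s < t))) x x')
        (nPlus p (Function.update S i ((S i).filter (fun t => s < t))) x x') with hKR
    set KL : Fin p → ℝ → (Fin p → ℝ) → (Fin p → ℝ) → ℝ := fun i s x x' =>
      bartKT p w P D γ (d+1)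
        (nMinus p (Function.update S i ((S i).filter (fun t => t < s))) x x')
        (nZero p (Function.update S i ((S i).filter (fun t => t < s))) x x')
        (nPlus p (Function.update S i ((S i).filter (fun t => t < s))) x x') with hKL
    set KG : Fin p → ℝ → (Fin p → ℝ) → (Fin p → ℝ) → ℝ := fun i s x x' =>
      if g i s x = g i s x' then (if g i s x then KR i s x x' else KL i s x x') else 0 with hKG
    set lam : Option ((i : Fin p) × {t : ℝ // t ∈ S i}) → ℝ := fun j =>
      Option.elim j (1 - P d) (fun z => P d * w z.1 / (W * ((S z.1).card : ℝ))) with hlam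
    set Kk : Option ((i : Fin p) × {t : ℝ // t ∈ S i}) → (Fin p → ℝ) → (Fin p → ℝ) → ℝ :=
      fun j => Option.elim j (fun _ _ => 1) (fun z => KG z.1 (z.2 : ℝ)) with hKk
    refine isMix_congr (isMix_mix (Option ((i : Fin p) × {t : ℝ // t ∈ S i})) lam Kk
      ?_ ?_ ?_) ?_
    · rintro (_ | z)
      · simp only [hlam, Option.elim]; linarith
      · simp only [hlam, Option.elim]
        exact div_nonneg (mul_nonneg hPd1 (hw _).le)
          (mul_nonneg hWpos.le (Nat.cast_nonneg _))
    · -- weights sum to one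
      rw [Fintype.sum_option, ← Finset.univ_sigma_univ, Finset.sum_sigma]
      have inner : ∀ i : Fin p,
          (∑ s : {t : ℝ // t ∈ S i}, lam (some ⟨i, s⟩))
            = if S i ≠ ∅ then P d / W * w i else 0 := by
        intro i
        simp only [hlam, Option.elim]
        rw [Finset.sum_const, Finset.card_univ, Fintype.card_coe, nsmul_eq_mul]
        by_cases h : S i = ∅
        · simp [h]
        · have hc : ((S i).card : ℝ) ≠ 0 :=
            Nat.cast_ne_zero.mpr (fun hh => h (Finset.card_eq_zero.mp hh))
          rw [if_pos h]
          field_simp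
      rw [Finset.sum_congr rfl (fun i _ => inner i), ← Finset.sum_filter, ← hF,
        ← Finset.mul_sum, ← hWdef]
      simp only [hlam, Option.elim]
      field_simp
      ring
    · rintro (_ | z)
      · exact isMix_const_one
      · exact isMix_glue (g z.1 (z.2 : ℝ)) (KR z.1 (z.2 : ℝ)) (KL z.1 (z.2 : ℝ))
          (ih (d+1) hmem (Function.update S z.1 ((S z.1).filter (fun t => (z.2 : ℝ) < t))))
          (ih (d+1) hmem (Function.update S z.1 ((S z.1).filter (fun t => t < (z.2 : ℝ)))))
    · -- pointwise equality with the BART recursion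
      intro x x'
      set nm : Fin p → ℕ := nMinus p S x x' with hnm
      set n0 : Fin p → ℕ := nZero p S x x' with hn0
      set np : Fin p → ℕ := nPlus p S x x' with hnp
      have hcountsum : ∀ i, nm i + n0 i + np i = (S i).card := fun i => counts_sum S x x' i
      have hne : ¬ ∀ i, nm i + n0 i + np i = 0 := by
        intro h
        have := h i0
        rw [hcountsum i0] at this
        exact hi0 (Finset.card_eq_zero.mp this)
      have hfilter : Finset.univ.filter (fun i => nm i + n0 i + np i ≠ 0) = F := by
        refine Finset.filter_congr fun i _ => ?_
        rw [hcountsum i, Ne, Finset.card_eq_zero]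
      have hbartW : bartW p w (fun i => nm i + n0 i + np i) = W := by
        show (∑ i ∈ Finset.univ.filter (fun i => nm i + n0 i + np i ≠ 0), w i) = W
        rw [hfilter]
      have hRHS : bartKT p w P D γ d nm n0 np
          = 1 - P d * (1 - (1/W) * ∑ i ∈ F, (w i / ((S i).card : ℝ)) *
              ((∑ k ∈ Finset.range (nm i),
                  bartKT p w P D γ (d+1) (Function.update nm i k) n0 np) +
               (∑ k ∈ Finset.range (np i),
                  bartKT p w P D γ (d+1) nm n0 (Function.update np i k)))) := by
        rw [bartKT, if_neg hne, if_neg hDd, hbartW, hfilter]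
        rw [one_div]
        exact congrArg (fun t : ℝ => 1 - P d * (1 - W⁻¹ * t))
          (Finset.sum_congr rfl fun i _ => by rw [hcountsum i])
      -- the per-axis identity
      have hGsum : ∀ i : Fin p, (∑ s ∈ S i, KG i s x x')
          = (∑ k ∈ Finset.range (nm i),
              bartKT p w P D γ (d+1) (Function.update nm i k) n0 np) +
            (∑ k ∈ Finset.range (np i),
              bartKT p w P D γ (d+1) nm n0 (Function.update np i k)) := by
        intro i
        rw [← Finset.sum_filter_add_sum_filter_not (S i)
          (fun s => s ≤ min (x i) (x' i)) (fun s => KG i s x x')]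
        rw [← Finset.sum_filter_add_sum_filter_not
          ((S i).filter (fun s => ¬ s ≤ min (x i) (x' i)))
          (fun s => max (x i) (x' i) < s) (fun s => KG i s x x')]
        have hT : ∀ s ∈ (S i).filter (fun s => s ≤ min (x i) (x' i)),
            KG i s x x' = bartKT p w P D γ (d+1)
              (Function.update nm i
                ((((S i).filter (fun t => t ≤ min (x i) (x' i))).filter
                  (fun t => s < t)).card)) n0 np := by
          intro s hs
          obtain ⟨hsS, hsm⟩ := Finset.mem_filter.mp hs
          have hx : g i s x = true := decide_eq_true (hsm.trans (min_le_left _ _))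
          have hx' : g i s x' = true := decide_eq_true (hsm.trans (min_le_right _ _))
          obtain ⟨e1, e2, e3⟩ := counts_R S x x' i s hsm
          rw [← hnm] at e1
          rw [← hn0] at e2
          rw [← hnp] at e3
          simp only [hKG, hx, hx', if_pos rfl, if_true, hKR, e1, e2, e3]
        have hU2 : ((S i).filter (fun s => ¬ s ≤ min (x i) (x' i))).filter
            (fun s => max (x i) (x' i) < s) = (S i).filter (fun s => max (x i) (x' i) < s) := by
          rw [Finset.filter_filter]
          refine Finset.filter_congr fun s _ => ?_
          constructor
          · rintro ⟨-, h⟩; exact h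
          · intro h; exact ⟨not_le.mpr (lt_of_le_of_lt min_le_max h), h⟩
        have hU : ∀ s ∈ (S i).filter (fun s => max (x i) (x' i) < s),
            KG i s x x' = bartKT p w P D γ (d+1) nm n0
              (Function.update np i
                ((((S i).filter (fun t => max (x i) (x' i) < t)).filter
                  (fun t => t < s)).card)) := by
          intro s hs
          obtain ⟨hsS, hsM⟩ := Finset.mem_filter.mp hs
          have hx : g i s x = false := by
            refine decide_eq_false (not_le.mpr ?_)
            exact lt_of_le_of_lt (le_max_left (x i) (x' i)) hsM
          have hx' : g i s x' = false := by
            refine decide_eq_false (not_le.mpr ?_)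
            exact lt_of_le_of_lt (le_max_right (x i) (x' i)) hsM
          obtain ⟨e1, e2, e3⟩ := counts_L S x x' i s hsM
          rw [← hnp] at e1
          rw [← hn0] at e2
          rw [← hnm] at e3
          simp only [hKG, hx, hx', if_pos rfl, Bool.false_eq_true, if_false, hKL, e1, e2, e3, if_true]
        have hMid : ∀ s ∈ ((S i).filter (fun s => ¬ s ≤ min (x i) (x' i))).filter
            (fun s => ¬ max (x i) (x' i) < s), KG i s x x' = 0 := by
          intro s hs
          obtain ⟨hs1, hs2⟩ := Finset.mem_filter.mp hs
          obtain ⟨hsS, hsm⟩ := Finset.mem_filter.mp hs1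
          have hsm' : min (x i) (x' i) < s := not_le.mp hsm
          have hsM : s ≤ max (x i) (x' i) := not_lt.mp hs2
          have hne' : g i s x ≠ g i s x' := by
            rcases le_total (x i) (x' i) with hle | hle
            · rw [min_eq_left hle] at hsm'
              rw [max_eq_right hle] at hsM
              simp only [hg, decide_eq_true_eq]
              rw [decide_eq_false (not_le.mpr hsm'), decide_eq_true hsM]
              simp
            · rw [min_eq_right hle] at hsm'
              rw [max_eq_left hle] at hsM
              simp only [hg]
              rw [decide_eq_true hsM, decide_eq_false (not_le.mpr hsm')]
              simp
          simp only [hKG, if_neg hne']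
        rw [Finset.sum_congr rfl hT, Finset.sum_congr hU2 (fun s hs => hU s (hU2 ▸ hs)),
          Finset.sum_eq_zero hMid, add_zero]
        rw [sum_card_filter_gt ((S i).filter (fun t => t ≤ min (x i) (x' i)))
          (fun k => bartKT p w P D γ (d+1) (Function.update nm i k) n0 np)]
        rw [sum_card_filter_lt ((S i).filter (fun t => max (x i) (x' i) < t))
          (fun k => bartKT p w P D γ (d+1) nm n0 (Function.update np i k))]
        rfl
      -- assemble the left-hand side
      have hA0 : ∀ i, S i = ∅ → nm i = 0 ∧ np i = 0 := by
        intro i h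
        constructor
        · show ((S i).filter (fun s => s ≤ min (x i) (x' i))).card = 0
          rw [h]; rfl
        · show ((S i).filter (fun s => max (x i) (x' i) < s)).card = 0
          rw [h]; rfl
      have hLHS : (∑ j, lam j * Kk j x x')
          = (1 - P d) + ∑ i ∈ F, (P d * w i / (W * ((S i).card : ℝ))) *
              ((∑ k ∈ Finset.range (nm i),
                  bartKT p w P D γ (d+1) (Function.update nm i k) n0 np) +
               (∑ k ∈ Finset.range (np i),
                  bartKT p w P D γ (d+1) nm n0 (Function.update np i k))) := by
        rw [Fintype.sum_option, ← Finset.univ_sigma_univ, Finset.sum_sigma]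
        congr 1
        · simp only [hlam, hKk, Option.elim]; ring
        have inner : ∀ i : Fin p, (∑ s : {t : ℝ // t ∈ S i}, lam (some ⟨i, s⟩) * Kk (some ⟨i, s⟩) x x')
            = (P d * w i / (W * ((S i).card : ℝ))) *
              ((∑ k ∈ Finset.range (nm i),
                  bartKT p w P D γ (d+1) (Function.update nm i k) n0 np) +
               (∑ k ∈ Finset.range (np i),
                  bartKT p w P D γ (d+1) nm n0 (Function.update np i k))) := by
          intro i
          have : (∑ s : {t : ℝ // t ∈ S i}, lam (some ⟨i, s⟩) * Kk (some ⟨i, s⟩) x x')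
              = ∑ s : {t : ℝ // t ∈ S i},
                  (P d * w i / (W * ((S i).card : ℝ))) * KG i (s : ℝ) x x' := by
            refine Finset.sum_congr rfl fun s _ => ?_
            simp only [hlam, hKk, Option.elim]
          rw [this, ← Finset.mul_sum, Finset.sum_coe_sort (S i) (fun s => KG i s x x'),
            hGsum i]
        rw [Finset.sum_congr rfl (fun i _ => inner i)]
        rw [← Finset.sum_filter_add_sum_filter_not Finset.univ (fun i => S i ≠ ∅), ← hF]
        have hz : ∑ i ∈ Finset.univ.filter (fun i => ¬ S i ≠ ∅),
            (P d * w i / (W * ((S i).card : ℝ))) *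
              ((∑ k ∈ Finset.range (nm i),
                  bartKT p w P D γ (d+1) (Function.update nm i k) n0 np) +
               (∑ k ∈ Finset.range (np i),
                  bartKT p w P D γ (d+1) nm n0 (Function.update np i k))) = 0 := by
          refine Finset.sum_eq_zero fun i hi => ?_
          have h : S i = ∅ := not_not.mp (Finset.mem_filter.mp hi).2
          obtain ⟨h1, h2⟩ := hA0 i h
          rw [h1, h2]
          simp
        rw [hz, add_zero]
      rw [hLHS, hRHS]
      have key : (∑ i ∈ F, (P d * w i / (W * ((S i).card : ℝ))) *
              ((∑ k ∈ Finset.range (nm i),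
                  bartKT p w P D γ (d+1) (Function.update nm i k) n0 np) +
               (∑ k ∈ Finset.range (np i),
                  bartKT p w P D γ (d+1) nm n0 (Function.update np i k))))
          = P d * ((1/W) * ∑ i ∈ F, (w i / ((S i).card : ℝ)) *
              ((∑ k ∈ Finset.range (nm i),
                  bartKT p w P D γ (d+1) (Function.update nm i k) n0 np) +
               (∑ k ∈ Finset.range (np i),
                  bartKT p w P D γ (d+1) nm n0 (Function.update np i k)))) := by
        rw [Finset.mul_sum, Finset.mul_sum]
        refine Finset.sum_congr rfl fun i _ => ?_
        ring
      rw [key]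
      ring

end BartAux

/-- Theorem 5: for every truncation depth `D`, `γ ∈ [0,1]`, and finite cutpoint sets
`S_1, …, S_p`, the kernel `K(x, x') = k^D_{0,γ}(n⁻(x,x'), n⁰(x,x'), n⁺(x,x'))` is
positive semidefinite and `K(x, x) = 1`: the truncated sub-correlation function is a
valid correlation function. -/
theorem bartKT_isCorrelation
    (p : ℕ) (hp : 1 ≤ p) (w : Fin p → ℝ) (hw : ∀ i, 0 < w i)
    (P : ℕ → ℝ) (hP : ∀ d, P d ∈ Set.Icc (0 : ℝ) 1)
    (D : ℕ) (γ : ℝ) (hγ : γ ∈ Set.Icc (0 : ℝ) 1) (S : Fin p → Finset ℝ) :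
    (∀ (N : ℕ) (x : Fin N → (Fin p → ℝ)) (c : Fin N → ℝ),
      0 ≤ ∑ a, ∑ b, c a * c b *
        bartKT p w P D γ 0
          (nMinus p S (x a) (x b)) (nZero p S (x a) (x b)) (nPlus p S (x a) (x b))) ∧
    (∀ x : Fin p → ℝ,
      bartKT p w P D γ 0 (nMinus p S x x) (nZero p S x x) (nPlus p S x x) = 1) := by
  have hmix := BartAux.isMix_bartKT p w hw P hP D γ hγ D 0 (by omega) S
  constructor
  · intro N x c
    exact BartAux.isMix_psd hmix x c
  · intro x
    exact BartAux.isMix_diag hmix x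
end

section
/- Let D ≥ 1, γ ∈ [0,1], and n⁻, n⁰, n⁺ ∈ ℕ^p with n = n⁻ + n⁰ + n⁺ ≠ 0. Then the truncated sub-correlation function at depth D−1 admits the closed form k^D_{D−1,γ}(n⁻, n⁰, n⁺) = 1 − P_{D−1}·(1 − c·(1 − (1/W(n))·Σ_{i : n_i ≠ 0} w_i·n⁰_i/n_i)), where c = 1 if n⁰ = 0 and c = 1 − (1−γ)·P_D if n⁰ ≠ 0. -/
/-- Closed form for the truncated sub-correlation function one level above the
truncation depth: for `D ≥ 1` and `n ≠ 0`,
`k^D_{D-1,γ}(n⁻, n⁰, n⁺) = 1 - P_{D-1}·(1 - c·(1 - (1/W(n))·Σ_{i : n_i ≠ 0} w_i n⁰_i / n_i))`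
where `c = 1` if `n⁰ = 0` and `c = 1 - (1-γ)·P_D` otherwise. -/
theorem bartKT_depth_one_closed_form
    (p : ℕ) (hp : 1 ≤ p) (w : Fin p → ℝ) (hw : ∀ i, 0 < w i)
    (P : ℕ → ℝ) (hP : ∀ d, P d ∈ Set.Icc (0 : ℝ) 1)
    (D : ℕ) (hD : 1 ≤ D) (γ : ℝ) (hγ : γ ∈ Set.Icc (0 : ℝ) 1)
    (nm n0 np : Fin p → ℕ) (hn : (fun i => nm i + n0 i + np i) ≠ 0) :
    bartKT p w P D γ (D - 1) nm n0 np =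
      1 - P (D - 1) * (1 - (if ∀ i, n0 i = 0 then (1 : ℝ) else 1 - (1 - γ) * P D) *
        (1 - (1 / bartW p w (fun i => nm i + n0 i + np i)) *
          ∑ i ∈ Finset.univ.filter (fun i => nm i + n0 i + np i ≠ 0),
            w i * ((n0 i : ℝ) / ((nm i + n0 i + np i : ℕ) : ℝ)))) := by
  have hne : ¬ ∀ i, nm i + n0 i + np i = 0 := by
    intro h; apply hn; funext i; simp [h i]
  set c : ℝ := if ∀ i, n0 i = 0 then (1 : ℝ) else 1 - (1 - γ) * P D with hc
  have haux : ∀ nm' np' : Fin p → ℕ, bartKT p w P D γ D nm' n0 np' = c := by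
    intro nm' np'
    rw [bartKT, hc]
    by_cases h0 : ∀ i, n0 i = 0
    · simp [h0]
    · have htot : ¬ ∀ i, nm' i + n0 i + np' i = 0 := by
        push_neg at h0 ⊢
        obtain ⟨i, hi⟩ := h0
        exact ⟨i, by omega⟩
      rw [if_neg htot, if_pos le_rfl]
  have hF : (Finset.univ.filter (fun i => nm i + n0 i + np i ≠ 0)).Nonempty := by
    push_neg at hne
    obtain ⟨i, hi⟩ := hne
    exact ⟨i, Finset.mem_filter.mpr ⟨Finset.mem_univ i, hi⟩⟩
  have hW : 0 < bartW p w (fun i => nm i + n0 i + np i) :=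
    Finset.sum_pos (fun i _ => hw i) hF
  rw [bartKT, if_neg hne, if_neg (by omega : ¬ D ≤ D - 1),
    (by omega : D - 1 + 1 = D)]
  simp only [haux, Finset.sum_const, Finset.card_range, nsmul_eq_mul]
  congr 2
  have hsum : ∀ i ∈ Finset.univ.filter (fun i => nm i + n0 i + np i ≠ 0),
      (w i / ((nm i + n0 i + np i : ℕ) : ℝ)) * ((nm i : ℝ) * c + (np i : ℝ) * c)
        = c * (w i - w i * ((n0 i : ℝ) / ((nm i + n0 i + np i : ℕ) : ℝ))) := by
    intro i hi
    simp only [Finset.mem_filter] at hi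
    have hni : ((nm i + n0 i + np i : ℕ) : ℝ) ≠ 0 := by
      exact_mod_cast hi.2
    have hcast : (nm i : ℝ) + (n0 i : ℝ) + (np i : ℝ) = ((nm i + n0 i + np i : ℕ) : ℝ) := by
      push_cast; ring
    rw [← hcast] at hni ⊢
    field_simp
    ring
  rw [Finset.sum_congr rfl hsum, ← Finset.mul_sum, Finset.sum_sub_distrib]
  rw [show (∑ i ∈ Finset.univ.filter (fun i => nm i + n0 i + np i ≠ 0), w i)
      = bartW p w (fun i => nm i + n0 i + np i) from rfl]
  field_simp
end
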